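/- arXiv:1407.4089 — 8 statements merged into one kernel-verified Lean document; each statement's English description precedes it below -/
import Mathlib

section
/- If η : ℝ → ℝ is arbitrary, K : ℝ → ℝ is injective, ∘_σ is a commutative binary operation on ℝ, and K(x + y·η(x)) = K(x) ∘_σ K(y) for all x, y ∈ ℝ, then there is a constant ρ ∈ ℝ with η(u) = 1 + ρu for all u ∈ ℝ. -/
theorem eq_one_add_mul_of_add_mul_symm {R : Type*} [CommRing R] {η : R → R}
    (hsymm : ∀ x y : R, x + y * η x = y + x * η y) (u : R) :
    η u = 1 + (η 1 - 1) * u := by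
  linear_combination hsymm u 1

/-- Lemma 1 (commutative case): if K is injective, ∘_σ is commutative and
    K(x + y·η(x)) = K(x) ∘_σ K(y) for all x, y, then η(u) = 1 + ρu for some ρ. -/
theorem lemma1_com (K : ℝ → ℝ) (σ : ℝ → ℝ → ℝ) (η : ℝ → ℝ)
    (hK : Function.Injective K)
    (hcomm : ∀ u v : ℝ, σ u v = σ v u)
    (heq : ∀ x y : ℝ, K (x + y * η x) = σ (K x) (K y)) :
    ∃ ρ : ℝ, ∀ u : ℝ, η u = 1 + ρ * u := by
  have hsymm : ∀ x y : ℝ, x + y * η x = y + x * η y := fun x y =>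
    hK <| by rw [heq, heq, hcomm]
  exact ⟨η 1 - 1, eq_one_add_mul_of_add_mul_symm hsymm⟩
end

section
/- If K : ℝ → ℝ is injective, ∘_σ is an associative binary operation on ℝ, η : ℝ → ℝ is arbitrary, and K(x + y·η(x)) = K(x) ∘_σ K(y) holds for all x, y ∈ ℝ, then the operation x ∘_η y := x + y·η(x) is associative, and consequently η satisfies the Gołąb–Schinzel equation η(x + y·η(x)) = η(x)·η(y) whenever η is nowhere zero. -/
theorem associative_of_injective_of_map_op {α β : Type*} {op : α → α → α} {σ : β → β → β}
    {K : α → β} (hK : Function.Injective K) (hσ : ∀ u v w, σ (σ u v) w = σ u (σ v w))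
    (hmap : ∀ x y, K (op x y) = σ (K x) (K y)) :
    ∀ x y z, op (op x y) z = op x (op y z) := by
  intro x y z
  apply hK
  rw [hmap, hmap, hσ, ← hmap, ← hmap]

/-- The operation `x ∘_η y` of the paper. -/
def etaOp (η : ℝ → ℝ) (x y : ℝ) : ℝ := x + y * η x

/-- Comparing `(x ∘_η y) ∘_η 1` with `x ∘_η (y ∘_η 1)`. -/
theorem golabSchinzel_of_etaOp_assoc {η : ℝ → ℝ}
    (hassoc : ∀ x y z, etaOp η (etaOp η x y) z = etaOp η x (etaOp η y z)) (x y : ℝ) :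
    η (x + y * η x) = η x * η y := by
  have h := hassoc x y 1
  simp only [etaOp] at h
  linarith

/-- Lemma 1 (associative case): if K is injective, ∘_σ is associative and
    K(x + y·η(x)) = K(x) ∘_σ K(y) for all x, y, then ∘_η is associative,
    and η satisfies the Gołąb–Schinzel equation whenever η is nowhere zero. -/
theorem lemma1_assoc (K : ℝ → ℝ) (σ : ℝ → ℝ → ℝ) (η : ℝ → ℝ)
    (hK : Function.Injective K)
    (hassoc : ∀ u v w : ℝ, σ (σ u v) w = σ u (σ v w))
    (heq : ∀ x y : ℝ, K (x + y * η x) = σ (K x) (K y)) :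
    (∀ x y z : ℝ, (x + y * η x) + z * η (x + y * η x)
        = x + (y + z * η y) * η x) ∧
    ((∀ x : ℝ, η x ≠ 0) → ∀ x y : ℝ, η (x + y * η x) = η x * η y) := by
  have hη : ∀ x y z, etaOp η (etaOp η x y) z = etaOp η x (etaOp η y z) :=
    associative_of_injective_of_map_op (op := etaOp η) hK hassoc heq
  exact ⟨hη, fun _ => golabSchinzel_of_etaOp_assoc hη⟩
end

section
/- If K, ψ, κ satisfy K(x + y·η(x)) − K(y) = ψ(y)·κ(x) for all x, y with η(0) = 1 and ψ(0) ≠ 0, then κ(0) = 0 and κ satisfies κ(x + y·η(x)) = κ(y) + κ(x)·ψ(y)/ψ(0) for all x, y. -/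
/-! Setting `y = 0` in the equation gives `K x - K 0 = ψ 0 * κ x`, so `κ` is the increment
`(K x - K 0) / ψ 0` of `K`. Dividing the equation by `ψ 0` then turns it into the one for `κ`. -/

section Pexider

variable {R F : Type*} [Semiring R] [Field F] {η : R → R} {K ψ κ : R → F}

theorem pexider_sub_at_zero (heq : ∀ x y, K (x + y * η x) - K y = ψ y * κ x) (x : R) :
    K x - K 0 = ψ 0 * κ x := by
  simpa using heq x 0

theorem pexider_kappa_eq_div (heq : ∀ x y, K (x + y * η x) - K y = ψ y * κ x)
    (hψ0 : ψ 0 ≠ 0) (x : R) : κ x = (K x - K 0) / ψ 0 := by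
  rw [pexider_sub_at_zero heq, mul_div_cancel_left₀ _ hψ0]

theorem pexider_kappa_zero (heq : ∀ x y, K (x + y * η x) - K y = ψ y * κ x)
    (hψ0 : ψ 0 ≠ 0) : κ 0 = 0 := by
  rw [pexider_kappa_eq_div heq hψ0, sub_self, zero_div]

theorem pexider_kappa_add (heq : ∀ x y, K (x + y * η x) - K y = ψ y * κ x)
    (hψ0 : ψ 0 ≠ 0) (x y : R) : κ (x + y * η x) = κ y + κ x * ψ y / ψ 0 := by
  have hK : K (x + y * η x) = K y + ψ y * κ x := eq_add_of_sub_eq' (heq x y)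
  rw [pexider_kappa_eq_div heq hψ0 (x + y * η x), pexider_kappa_eq_div heq hψ0 y, hK]
  ring

end Pexider

theorem GBEP_kappa_general (η K ψ κ : ℝ → ℝ)
    (heq : ∀ x y : ℝ, K (x + y * η x) - K y = ψ y * κ x)
    (hψ0 : ψ 0 ≠ 0) :
    κ 0 = 0 ∧ ∀ x y : ℝ, κ (x + y * η x) = κ y + κ x * ψ y / ψ 0 :=
  ⟨pexider_kappa_zero heq hψ0, pexider_kappa_add heq hψ0⟩

/-- For the Pexiderized Goldie–Beurling equation with η(0) = 1 and ψ(0) ≠ 0: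
    κ(0) = 0 and κ(x + y·η(x)) = κ(y) + κ(x)·ψ(y)/ψ(0). -/
theorem GBEP_kappa (η K ψ κ : ℝ → ℝ)
    (hη0 : η 0 = 1)
    (heq : ∀ x y : ℝ, K (x + y * η x) - K y = ψ y * κ x)
    (hψ0 : ψ 0 ≠ 0) :
    κ 0 = 0 ∧ ∀ x y : ℝ, κ (x + y * η x) = κ y + κ x * ψ y / ψ 0 :=
  GBEP_kappa_general η K ψ κ heq hψ0
end

section
/- Suppose K, ψ, κ satisfy K(x + y·η(x)) − K(y) = ψ(y)·κ(x) for all x, y, where η is such that x ∘_η y := x + y·η(x) is commutative, ψ(0) ≠ 0, and κ(x) ≠ 0 for all x > 0. Then there is s ∈ ℝ such that ψ(x)/ψ(0) = 1 + s·κ(x) for all x > 0. -/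
/-! Since `x ∘ y = x + y (1 + ρ x)` is commutative with right identity `0`, setting `y = 0`
gives `K x = K 0 + ψ 0 κ x`, and then `K (x ∘ y) = K (y ∘ x)` becomes
`(ψ y - ψ 0) κ x = (ψ x - ψ 0) κ y`. Taking `y = 1`, where `κ 1 ≠ 0`, shows that
`(ψ x - ψ 0) / κ x` is the constant `s ψ 0`. -/

theorem sub_mul_eq_sub_mul_of_pexider_comm {α R : Type*} [CommRing R] {op : α → α → α} {e : α}
    {K ψ κ : α → R} (hcomm : ∀ x y, op x y = op y x) (he : ∀ x, op x e = x)
    (heq : ∀ x y, K (op x y) - K y = ψ y * κ x) (x y : α) :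
    (ψ y - ψ e) * κ x = (ψ x - ψ e) * κ y := by
  have hKx : K x - K e = ψ e * κ x := by simpa only [he] using heq x e
  have hKy : K y - K e = ψ e * κ y := by simpa only [he] using heq y e
  have hxy := heq x y
  rw [hcomm] at hxy
  linear_combination heq y x - hxy + hKx - hKy

/-- Lemma 2: for the Pexiderized Goldie–Beurling equation with η(x) = 1 + ρx,
    ψ(0) ≠ 0 and κ nonvanishing on (0, ∞), there is s with
    ψ(x)/ψ(0) = 1 + s·κ(x) for all x > 0. -/
theorem GBEP_lemma2 (ρ : ℝ) (K ψ κ : ℝ → ℝ)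
    (heq : ∀ x y : ℝ, K (x + y * (1 + ρ * x)) - K y = ψ y * κ x)
    (hψ0 : ψ 0 ≠ 0)
    (hκ : ∀ x : ℝ, 0 < x → κ x ≠ 0) :
    ∃ s : ℝ, ∀ x : ℝ, 0 < x → ψ x / ψ 0 = 1 + s * κ x := by
  have hcross : ∀ x y, (ψ y - ψ 0) * κ x = (ψ x - ψ 0) * κ y :=
    sub_mul_eq_sub_mul_of_pexider_comm (op := fun x y => x + y * (1 + ρ * x))
      (fun x y => by ring) (fun x => by ring) heq
  have hκ1 : κ 1 ≠ 0 := hκ 1 one_pos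
  refine ⟨(ψ 1 - ψ 0) / (ψ 0 * κ 1), fun x _ => ?_⟩
  field_simp
  linear_combination -hcross x 1
end

section
/- Let α, β : ℝ → ℝ be functions with α injective, and define x ∘ y := α(x) + y·β(x). If ∘ is associative, then β(x ∘ y) = β(x)·β(y) and α(x ∘ y) = α(x) + α(y)·β(x) for all x, y ∈ ℝ. -/
theorem affine_coeffs_eq_of_forall {R : Type*} [Ring R] {a b c d : R}
    (h : ∀ z, a + z * b = c + z * d) : a = c ∧ b = d := by
  have h₀ : a = c := by simpa using h 0
  refine ⟨h₀, ?_⟩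
  simpa [h₀] using h 1

theorem propC_step_general (α β : ℝ → ℝ)
    (hassoc : ∀ x y z : ℝ,
      α (α x + y * β x) + z * β (α x + y * β x)
        = α x + (α y + z * β y) * β x) :
    ∀ x y : ℝ, β (α x + y * β x) = β x * β y ∧
      α (α x + y * β x) = α x + α y * β x := by
  intro x y
  refine (affine_coeffs_eq_of_forall fun z => ?_).symm
  rw [hassoc]
  ring

/-- If x ∘ y := α(x) + y·β(x) is associative with α injective, then
    β(x ∘ y) = β(x)·β(y) and α(x ∘ y) = α(x) + α(y)·β(x). -/
theorem propC_step (α β : ℝ → ℝ)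
    (hα : Function.Injective α)
    (hassoc : ∀ x y z : ℝ,
      α (α x + y * β x) + z * β (α x + y * β x)
        = α x + (α y + z * β y) * β x) :
    ∀ x y : ℝ, β (α x + y * β x) = β x * β y ∧
      α (α x + y * β x) = α x + α y * β x :=
  propC_step_general α β hassoc
end

section
/- Let α, β : ℝ → ℝ be continuous with α injective, and suppose x ∘ y := α(x) + y·β(x) makes ℝ into a group containing 0. Then there exist constants b, c ∈ ℝ with b·c = 0 such that α(x) = x + b and β(x) = 1 + c(x + b) for all x; i.e., either (ℝ, ∘) is a Popa group x ∘ y = x + y(1 + cx), or the b-shifted additive group x ∘ y = x + y + b. -/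
/-!
Left translation `y ↦ x ∘ y = α x + y * β x` is affine with slope `β x`. If `β a ≠ 1` it has a
fixed point `p`, and `a ∘ p = p` forces `a` to be the identity `e` by cancellation; but the identity
laws give `β e = 1`. Hence `β ≡ 1`, so `c = 0`, and the right identity law `x ∘ e = x` then reads
`α x = x - e`.
-/

section AffineGroupLaw

variable {K : Type*} [Field K] {α β : K → K} {e : K}

theorem eq_of_affine_mul_eq_self
    (hassoc : ∀ x y z : K,
      α (α x + y * β x) + z * β (α x + y * β x) = α x + (α y + z * β y) * β x)
    (hright : ∀ x : K, α x + e * β x = x) (hinv : ∀ x : K, ∃ y : K, α x + y * β x = e)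
    {a p : K} (hfix : α a + p * β a = p) : a = e := by
  obtain ⟨q, hq⟩ := hinv p
  have h := hassoc a p q
  rw [hfix, hq, hright] at h
  exact h.symm

theorem affine_slope_eq_one
    (hassoc : ∀ x y z : K,
      α (α x + y * β x) + z * β (α x + y * β x) = α x + (α y + z * β y) * β x)
    (hleft : ∀ x : K, α e + x * β e = x) (hright : ∀ x : K, α x + e * β x = x)
    (hinv : ∀ x : K, ∃ y : K, α x + y * β x = e) (a : K) : β a = 1 := by
  have hβe : β e = 1 := by
    have h0 := hleft 0
    have h1 := hleft 1
    simp only [zero_mul, add_zero, one_mul] at h0 h1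
    rw [h0, zero_add] at h1
    exact h1
  by_contra hne
  have hslope : 1 - β a ≠ 0 := sub_ne_zero.mpr (Ne.symm hne)
  have hfix : α a + α a / (1 - β a) * β a = α a / (1 - β a) := by
    field_simp
    ring
  rw [eq_of_affine_mul_eq_self hassoc hright hinv hfix] at hne
  exact hne hβe

end AffineGroupLaw

theorem propC_general (α β : ℝ → ℝ)
    (hassoc : ∀ x y z : ℝ,
      α (α x + y * β x) + z * β (α x + y * β x)
        = α x + (α y + z * β y) * β x)
    (hgroup : ∃ e : ℝ, (∀ x : ℝ, α e + x * β e = x ∧ α x + e * β x = x) ∧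
      ∀ x : ℝ, ∃ y : ℝ, α x + y * β x = e ∧ α y + x * β y = e) :
    ∃ b c : ℝ, b * c = 0 ∧ (∀ x : ℝ, α x = x + b) ∧
      (∀ x : ℝ, β x = 1 + c * (x + b)) := by
  obtain ⟨e, hid, hinv⟩ := hgroup
  have hright : ∀ x, α x + e * β x = x := fun x => (hid x).2
  have hβ : ∀ x, β x = 1 :=
    affine_slope_eq_one hassoc (fun x => (hid x).1) hright fun x => (hinv x).imp fun _ => And.left
  refine ⟨-e, 0, mul_zero _, fun x => ?_, fun x => by rw [hβ, zero_mul, add_zero]⟩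
  have h := hright x
  rw [hβ, mul_one] at h
  linarith

/-- Proposition C: if α, β are continuous, α injective, and
    x ∘ y := α(x) + y·β(x) makes ℝ a group, then for some constants b, c with
    bc = 0 we have α(x) = x + b and β(x) = 1 + c(x + b): the group is either a
    Popa group or the b-shifted additive reals. -/
theorem propC (α β : ℝ → ℝ)
    (hαc : Continuous α) (hβc : Continuous β)
    (hα : Function.Injective α)
    (hassoc : ∀ x y z : ℝ,
      α (α x + y * β x) + z * β (α x + y * β x)
        = α x + (α y + z * β y) * β x)
    (hgroup : ∃ e : ℝ, (∀ x : ℝ, α e + x * β e = x ∧ α x + e * β x = x) ∧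
      ∀ x : ℝ, ∃ y : ℝ, α x + y * β x = e ∧ α y + x * β y = e) :
    ∃ b c : ℝ, b * c = 0 ∧ (∀ x : ℝ, α x = x + b) ∧
      (∀ x : ℝ, β x = 1 + c * (x + b)) :=
  propC_general α β hassoc hgroup
end

section
/- Let ρ ≥ 0, η(x) := 1 + ρx, and let f : ℝ → ℝ be continuous, positive on [0, ∞), and satisfy f(x + y·η(x)) = f(x)·f(y) for all x, y ≥ 0 with η(x) > 0. Define τ_f(x) := ∫₀ˣ dt/f(t), ψ(x) := η(x)/f(x), and K := τ_f. Then K solves the Pexiderized Goldie–Beurling equation K(v + u·η(v)) − K(v) = ψ(v)·τ_f(u) for all u, v ≥ 0 with η(v) > 0. -/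
/-!
Substituting `x = v + t η(v)` in `∫_v^{v + u η(v)} dx / f(x)` and using
`f(v + t η(v)) = f(v) f(t)` pulls out the constant factor `η(v) / f(v)`.
-/

open Set

theorem integral_add_mul_eq_mul_integral_of_eqOn {g : ℝ → ℝ} {u v c a : ℝ}
    (hg : ∀ t ∈ uIcc 0 u, g (v + t * c) = a * g t) :
    ∫ x in v..v + u * c, g x = c * a * ∫ t in (0 : ℝ)..u, g t := by
  have hsubst : ∫ x in v..v + u * c, g x = c * ∫ t in (0 : ℝ)..u, g (v + c * t) := by
    have h := intervalIntegral.smul_integral_comp_add_mul g c v (a := 0) (b := u)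
    rw [mul_zero, add_zero, mul_comm c u, smul_eq_mul] at h
    exact h.symm
  rw [hsubst, intervalIntegral.integral_congr fun t ht => (mul_comm c t ▸ hg t ht),
    intervalIntegral.integral_const_mul, mul_assoc]

theorem intervalIntegrable_one_div_of_pos {f : ℝ → ℝ} (hf : Continuous f)
    (hfpos : ∀ x : ℝ, 0 ≤ x → 0 < f x) {b : ℝ} (hb : 0 ≤ b) :
    IntervalIntegrable (fun t => 1 / f t) MeasureTheory.volume 0 b := by
  refine ContinuousOn.intervalIntegrable ?_
  rw [uIcc_of_le hb]
  exact continuousOn_const.div hf.continuousOn fun x hx => (hfpos x hx.1).ne'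

open intervalIntegral in
theorem propD_general (ρ : ℝ) (f : ℝ → ℝ)
    (hf : Continuous f)
    (hfpos : ∀ x : ℝ, 0 ≤ x → 0 < f x)
    (hCBE : ∀ x y : ℝ, 0 ≤ x → 0 ≤ y → 0 < 1 + ρ * x →
      f (x + y * (1 + ρ * x)) = f x * f y) :
    ∀ u v : ℝ, 0 ≤ u → 0 ≤ v → 0 < 1 + ρ * v →
      (∫ t in (0:ℝ)..(v + u * (1 + ρ * v)), 1 / f t)
          - (∫ t in (0:ℝ)..v, 1 / f t)
        = ((1 + ρ * v) / f v) * ∫ t in (0:ℝ)..u, 1 / f t := by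
  intro u v hu hv hη
  have hscale : ∀ t ∈ uIcc 0 u, 1 / f (v + t * (1 + ρ * v)) = 1 / f v * (1 / f t) := by
    intro t ht
    rw [uIcc_of_le hu] at ht
    rw [hCBE v t hv ht.1 hη, one_div_mul_one_div]
  rw [integral_interval_sub_left
      (intervalIntegrable_one_div_of_pos hf hfpos (add_nonneg hv (mul_nonneg hu hη.le)))
      (intervalIntegrable_one_div_of_pos hf hfpos hv),
    integral_add_mul_eq_mul_integral_of_eqOn hscale, mul_one_div]

open intervalIntegral in
/-- Proposition D: if f is continuous, positive on [0,∞) and satisfies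
    f(x + y·η(x)) = f(x)·f(y) with η(x) = 1 + ρx, ρ ≥ 0, then
    K := τ_f, where τ_f(x) = ∫₀ˣ dt/f(t), solves the Pexiderized
    Goldie–Beurling equation with auxiliaries ψ := η/f and κ := τ_f. -/
theorem propD (ρ : ℝ) (hρ : 0 ≤ ρ) (f : ℝ → ℝ)
    (hf : Continuous f)
    (hfpos : ∀ x : ℝ, 0 ≤ x → 0 < f x)
    (hCBE : ∀ x y : ℝ, 0 ≤ x → 0 ≤ y → 0 < 1 + ρ * x →
      f (x + y * (1 + ρ * x)) = f x * f y) :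
    ∀ u v : ℝ, 0 ≤ u → 0 ≤ v → 0 < 1 + ρ * v →
      (∫ t in (0:ℝ)..(v + u * (1 + ρ * v)), 1 / f t)
          - (∫ t in (0:ℝ)..v, 1 / f t)
        = ((1 + ρ * v) / f v) * ∫ t in (0:ℝ)..u, 1 / f t :=
  propD_general ρ f hf hfpos hCBE
end

section
/- Suppose K, ψ, κ : ℝ → ℝ with K differentiable, κ differentiable, η(x) = 1 + ρx, η(0) = 1, and K(x + y·η(x)) − K(y) = ψ(y)·κ(x) for all x, y. Then K′(y)·η(y) = ψ(y)·κ′(0) and K′(x) = ψ(0)·κ′(x) for all x, y; hence if ψ(0)·κ′(0) ≠ 0, then K′(x)/K′(0) = κ′(x)/κ′(0) for all x. -/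
/-!
Putting `y = 0` in the equation gives `K = ψ 0 • κ + K 0`, whence `K' = ψ(0) κ'`. Since
`x + y (1 + ρ x) = y + (1 + ρ y) x`, the equation says `K (y + (1 + ρ y) x) = ψ(y) κ(x) + K(y)`,
and differentiating in `x` at `0` gives `K'(y) (1 + ρ y) = ψ(y) κ'(0)`.
-/

theorem deriv_comp_const_add_mul {𝕜 E : Type*} [NontriviallyNormedField 𝕜]
    [NormedAddCommGroup E] [NormedSpace 𝕜 E] (f : 𝕜 → E) (a b x : 𝕜) :
    deriv (fun t ↦ f (a + b * t)) x = b • deriv f (a + b * x) := by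
  rw [deriv_comp_mul_left b (fun t ↦ f (a + t)) x, deriv_comp_const_add]

section GoldieBeurling

variable {ρ : ℝ} {K ψ κ : ℝ → ℝ}

theorem eq_const_mul_add_of_goldieBeurling
    (heq : ∀ x y : ℝ, K (x + y * (1 + ρ * x)) - K y = ψ y * κ x) :
    K = fun x ↦ ψ 0 * κ x + K 0 := by
  funext x
  have h := heq x 0
  rw [zero_mul, add_zero] at h
  linarith

theorem deriv_eq_const_mul_deriv_of_goldieBeurling
    (heq : ∀ x y : ℝ, K (x + y * (1 + ρ * x)) - K y = ψ y * κ x) (x : ℝ) :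
    deriv K x = ψ 0 * deriv κ x := by
  rw [eq_const_mul_add_of_goldieBeurling heq, deriv_add_const, deriv_const_mul_field]

theorem deriv_mul_eta_of_goldieBeurling
    (heq : ∀ x y : ℝ, K (x + y * (1 + ρ * x)) - K y = ψ y * κ x) (y : ℝ) :
    deriv K y * (1 + ρ * y) = ψ y * deriv κ 0 := by
  have hshift : (fun x ↦ K (y + (1 + ρ * y) * x)) = fun x ↦ ψ y * κ x + K y := by
    funext x
    have h := heq x y
    rw [show x + y * (1 + ρ * x) = y + (1 + ρ * y) * x by ring] at h
    linarith
  have hderiv := congrArg (deriv · 0) hshift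
  simp only [deriv_comp_const_add_mul, deriv_add_const, deriv_const_mul_field, mul_zero,
    add_zero, smul_eq_mul] at hderiv
  rw [mul_comm, hderiv]

end GoldieBeurling

theorem lemma5_derivs_general (ρ : ℝ) (K ψ κ : ℝ → ℝ)
    (heq : ∀ x y : ℝ, K (x + y * (1 + ρ * x)) - K y = ψ y * κ x) :
    (∀ y : ℝ, deriv K y * (1 + ρ * y) = ψ y * deriv κ 0) ∧
    (∀ x : ℝ, deriv K x = ψ 0 * deriv κ x) ∧
    (ψ 0 * deriv κ 0 ≠ 0 →
      ∀ x : ℝ, deriv K x / deriv K 0 = deriv κ x / deriv κ 0) := by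
  have hK' := deriv_eq_const_mul_deriv_of_goldieBeurling heq
  refine ⟨deriv_mul_eta_of_goldieBeurling heq, hK', fun hne x ↦ ?_⟩
  rw [hK' x, hK' 0, mul_div_mul_left _ _ (left_ne_zero_of_mul hne)]

/-- Lemma 5 (derivative identities): if K, κ are differentiable and satisfy the
    Pexiderized Goldie–Beurling equation with η(x) = 1 + ρx, then
    K′(y)·η(y) = ψ(y)·κ′(0), K′(x) = ψ(0)·κ′(x), and if ψ(0)·κ′(0) ≠ 0 then
    K′(x)/K′(0) = κ′(x)/κ′(0). -/
theorem lemma5_derivs (ρ : ℝ) (K ψ κ : ℝ → ℝ)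
    (hK : Differentiable ℝ K) (hκ : Differentiable ℝ κ)
    (heq : ∀ x y : ℝ, K (x + y * (1 + ρ * x)) - K y = ψ y * κ x) :
    (∀ y : ℝ, deriv K y * (1 + ρ * y) = ψ y * deriv κ 0) ∧
    (∀ x : ℝ, deriv K x = ψ 0 * deriv κ x) ∧
    (ψ 0 * deriv κ 0 ≠ 0 →
      ∀ x : ℝ, deriv K x / deriv K 0 = deriv κ x / deriv κ 0) :=
  lemma5_derivs_general ρ K ψ κ heq
end
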